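/- arXiv:1607.02086 — 8 statements merged into one kernel-verified Lean document; each statement's English description precedes it below -/
import Mathlib

section
/- Suppose E1 and E2 are distinct ellipses with the same center, and both E1 and E2 are inscribed in the same convex quadrilateral Q. Then Q is a parallelogram (i.e., each side of Q is parallel to the opposite side). -/
noncomputable section

abbrev Pt : Type := EuclideanSpace ℝ (Fin 2)

/-- An ellipse with a given center: the image of the unit circle under an invertible
affine transformation mapping the origin to the center. -/
def IsEllipseWithCenter (E : Set Pt) (c : Pt) : Prop :=
  ∃ T : Pt ≃ᵃ[ℝ] Pt, E = T '' Metric.sphere (0 : Pt) 1 ∧ T (0 : Pt) = c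

/-- A convex quadrilateral with vertices listed in cyclic order: each vertex lies
outside the convex hull of the other three. -/
def ConvexQuad (P1 P2 P3 P4 : Pt) : Prop :=
  P1 ∉ convexHull ℝ ({P2, P3, P4} : Set Pt) ∧
  P2 ∉ convexHull ℝ ({P1, P3, P4} : Set Pt) ∧
  P3 ∉ convexHull ℝ ({P1, P2, P4} : Set Pt) ∧
  P4 ∉ convexHull ℝ ({P1, P2, P3} : Set Pt)

/-- An ellipse (or any set) is inscribed in the quadrilateral with vertices
`P1 P2 P3 P4` (in cyclic order) if it is contained in the quadrilateral and
meets each of the four sides in exactly one point. -/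
def InscribedIn (E : Set Pt) (P1 P2 P3 P4 : Pt) : Prop :=
  E ⊆ convexHull ℝ ({P1, P2, P3, P4} : Set Pt) ∧
  (∃ p, E ∩ segment ℝ P1 P2 = {p}) ∧
  (∃ p, E ∩ segment ℝ P2 P3 = {p}) ∧
  (∃ p, E ∩ segment ℝ P3 P4 = {p}) ∧
  (∃ p, E ∩ segment ℝ P4 P1 = {p})

/-- Each side is parallel to the opposite side. -/
def IsParallelogram (P1 P2 P3 P4 : Pt) : Prop :=
  AffineSubspace.Parallel (affineSpan ℝ ({P1, P2} : Set Pt)) (affineSpan ℝ ({P3, P4} : Set Pt)) ∧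
  AffineSubspace.Parallel (affineSpan ℝ ({P2, P3} : Set Pt)) (affineSpan ℝ ({P4, P1} : Set Pt))

/-
Write an ellipse centred at `c` as `E = {x | ‖L (x - c)‖ = 1}` with `L` linear. As `E` lies in `Q`,
each side line meets `E` only where the side does, so it is tangent to `E`; and a line through `a`
with direction `w` is tangent to `E` iff `‖L w‖ ^ 2 = (det L) ^ 2 * cross (a - c) w ^ 2`. The factor
`cross (a - c) w ^ 2` does not depend on `E`, so the quadratic forms `w ↦ ‖L w‖ ^ 2 / (det L) ^ 2`
of the two ellipses agree on the four side directions. These forms determine the ellipse, so their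
difference is a nonzero binary quadratic form; it has at most two isotropic lines, and adjacent
sides of `Q` are not parallel, hence opposite sides are.
-/

open Module AffineMap
open scoped RealInnerProductSpace

namespace QuadraticMap

theorem map_smul_add_smul {K V : Type*} [CommRing K] [AddCommGroup V] [Module K V]
    (Q : QuadraticForm K V) (a b : K) (u v : V) :
    Q (a • u + b • v) = a * a * Q u + b * b * Q v + a * b * polar Q u v := by
  rw [QuadraticMap.map_add Q, QuadraticMap.map_smul, QuadraticMap.map_smul, polar_smul_left,
    polar_smul_right]
  simp only [smul_eq_mul]
  ring

theorem not_linearIndependent_of_map_eq_zero {K V : Type*} [Field K]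
    [AddCommGroup V] [Module K V] [FiniteDimensional K V] (hV : finrank K V = 2)
    {Q : QuadraticForm K V} (hQ : Q ≠ 0) {u v w : V}
    (huv : LinearIndependent K ![u, v]) (hvw : LinearIndependent K ![v, w])
    (hu : Q u = 0) (hv : Q v = 0) (hw : Q w = 0) : ¬ LinearIndependent K ![u, w] := by
  intro huw
  have hspan : ∀ x : V, ∃ a b : K, a • u + b • v = x := by
    intro x
    have hx : x ∈ Submodule.span K (Set.range ![u, v]) :=
      huv.span_eq_top_of_card_eq_finrank' (by simp [hV]) ▸ Submodule.mem_top
    rwa [Matrix.range_cons, Matrix.range_cons, Matrix.range_empty, Set.union_empty,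
      Set.singleton_union, Submodule.mem_span_pair] at hx
  obtain ⟨a, b, rfl⟩ := hspan w
  have ha : a ≠ 0 := by
    rintro rfl
    exact neg_ne_zero.2 one_ne_zero (LinearIndependent.pair_iff.1 hvw b (-1) (by simp)).2
  have hb : b ≠ 0 := by
    rintro rfl
    exact neg_ne_zero.2 one_ne_zero (LinearIndependent.pair_iff.1 huw a (-1) (by simp)).2
  have hpolar : polar Q u v = 0 := by
    rw [map_smul_add_smul, hu, hv] at hw
    simpa [ha, hb] using hw
  refine hQ (QuadraticMap.ext fun x => ?_)
  obtain ⟨s, t, rfl⟩ := hspan x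
  simp [map_smul_add_smul, hu, hv, hpolar]

end QuadraticMap

theorem parallel_of_not_linearIndependent {K V P : Type*} [Field K] [AddCommGroup V] [Module K V]
    [AddTorsor V P] {A B C D : P} (hAB : A ≠ B) (hCD : C ≠ D)
    (h : ¬ LinearIndependent K ![B -ᵥ A, D -ᵥ C]) : (line[K, A, B]).Parallel line[K, C, D] := by
  rw [LinearIndependent.pair_iff' (vsub_ne_zero.2 hAB.symm)] at h
  simp only [not_forall, not_not] at h
  obtain ⟨a, ha⟩ := h
  have ha0 : a ≠ 0 := by
    rintro rfl
    exact hCD (vsub_eq_zero_iff_eq.1 (by simpa using ha.symm)).symm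
  exact AffineSubspace.affineSpan_pair_parallel_iff_exists_unit_smul'.2 ⟨Units.mk0 a ha0, ha⟩

theorem le_one_of_lineMap_mem_convexHull_insert {𝕜 E : Type*} [Field 𝕜] [LinearOrder 𝕜]
    [IsStrictOrderedRing 𝕜] [AddCommGroup E] [Module 𝕜 E] {A B : E} {S : Set E} {t : 𝕜}
    (hA : A ∈ convexHull 𝕜 S) (hB : B ∉ convexHull 𝕜 S)
    (h : lineMap A B t ∈ convexHull 𝕜 (insert B S)) : t ≤ 1 := by
  by_contra! ht
  have hAB : A ≠ B := fun h => hB (h ▸ hA)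
  rw [convexHull_insert (convexHull_nonempty_iff.1 ⟨A, hA⟩), convexJoin_singleton_left] at h
  obtain ⟨y, hy, hxy⟩ := Set.mem_iUnion₂.1 h
  have hBx : B ≠ lineMap A B t := fun h =>
    ht.ne (lineMap_injective 𝕜 hAB ((lineMap_apply_one A B).trans h))
  have hABx : Wbtw 𝕜 A B (lineMap A B t) :=
    wbtw_iff_left_eq_or_right_mem_image_Ici.2 (Or.inr ⟨t, ht.le, rfl⟩)
  have hABy : Wbtw 𝕜 A B y := hABx.trans_expand_left (mem_segment_iff_wbtw.1 hxy) hBx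
  exact hB ((convex_convexHull 𝕜 S).segment_subset hA hy (mem_segment_iff_wbtw.2 hABy))

theorem real_inner_sq_eq_of_existsUnique_norm_add_smul_eq_one {V : Type*}
    [NormedAddCommGroup V] [InnerProductSpace ℝ V] {u v : V} (hv : v ≠ 0)
    (h : ∃! t : ℝ, ‖u + t • v‖ = 1) : ⟪u, v⟫ ^ 2 = ‖v‖ ^ 2 * (‖u‖ ^ 2 - 1) := by
  have hquad : ∀ t : ℝ,
      ‖u + t • v‖ = 1 ↔ ‖v‖ ^ 2 * (t * t) + 2 * ⟪u, v⟫ * t + (‖u‖ ^ 2 - 1) = 0 := fun t => by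
    rw [← pow_eq_one_iff_of_nonneg (norm_nonneg _) two_ne_zero, norm_add_sq_real,
      real_inner_smul_right, norm_smul, mul_pow, Real.norm_eq_abs, sq_abs]
    constructor <;> intro h <;> linarith
  simp_rw [hquad] at h
  have := discrim_eq_zero_of_existsUnique (pow_ne_zero 2 (norm_ne_zero_iff.2 hv)) h
  rw [discrim] at this
  linarith

def cross (x y : Pt) : ℝ := x 0 * y 1 - x 1 * y 0

theorem real_inner_sq_add_cross_sq (x y : Pt) :
    ⟪x, y⟫ ^ 2 + cross x y ^ 2 = ‖x‖ ^ 2 * ‖y‖ ^ 2 := by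
  simp only [cross, EuclideanSpace.norm_sq_eq, PiLp.inner_apply, Fin.sum_univ_two,
    Real.norm_eq_abs, sq_abs, RCLike.inner_apply, conj_trivial]
  ring

theorem cross_map (L : Pt →ₗ[ℝ] Pt) (x y : Pt) :
    cross (L x) (L y) = LinearMap.det L * cross x y := by
  let b := (EuclideanSpace.basisFun (Fin 2) ℝ).toBasis
  have hL : ∀ z : Pt, L z = z 0 • L (b 0) + z 1 • L (b 1) := by
    intro z
    rw [← L.map_smul, ← L.map_smul, ← L.map_add]
    congr 1
    ext i; fin_cases i <;> simp [b]
  rw [← LinearMap.det_toMatrix b, Matrix.det_fin_two, hL x, hL y]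
  simp only [LinearMap.toMatrix_apply, cross, b, OrthonormalBasis.coe_toBasis,
    OrthonormalBasis.coe_toBasis_repr_apply, EuclideanSpace.basisFun_apply,
    EuclideanSpace.basisFun_repr, PiLp.add_apply, PiLp.smul_apply, smul_eq_mul]
  ring

theorem sq_det_eq_of_forall_norm_eq {L M : Pt →ₗ[ℝ] Pt} (h : ∀ x, ‖L x‖ = ‖M x‖) :
    LinearMap.det L ^ 2 = LinearMap.det M ^ 2 := by
  have hinner : ∀ x y, ⟪L x, L y⟫ = ⟪M x, M y⟫ := fun x y => by
    rw [real_inner_eq_norm_add_mul_self_sub_norm_mul_self_sub_norm_mul_self_div_two,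
      real_inner_eq_norm_add_mul_self_sub_norm_mul_self_sub_norm_mul_self_div_two, ← map_add,
      ← map_add, h, h x, h y]
  let e : Fin 2 → Pt := fun i => EuclideanSpace.single i 1
  have he : cross (e 0) (e 1) = 1 := by simp [cross, e]
  have hL := real_inner_sq_add_cross_sq (L (e 0)) (L (e 1))
  have hM := real_inner_sq_add_cross_sq (M (e 0)) (M (e 1))
  rw [cross_map, he, mul_one] at hL hM
  rw [hinner, h, h] at hL
  linarith

def ellipse (L : Pt ≃ₗ[ℝ] Pt) (c : Pt) : Set Pt := {x | ‖L (x - c)‖ = 1}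

theorem IsEllipseWithCenter.exists_eq_ellipse {E : Set Pt} {c : Pt}
    (h : IsEllipseWithCenter E c) : ∃ L : Pt ≃ₗ[ℝ] Pt, E = ellipse L c := by
  obtain ⟨T, rfl, rfl⟩ := h
  refine ⟨T.symm.linear, Set.ext fun x => ?_⟩
  have hx : T.symm x = T.symm.linear (x - T 0) := by
    simpa using T.symm.map_vadd (T 0) (x - T 0)
  rw [ellipse, Set.mem_ofPred_eq, ← hx, ← mem_sphere_zero_iff_norm]
  exact T.toEquiv.image_eq_preimage_symm _ ▸ Iff.rfl

/-- The squared support function of `ellipse L c`: `supportForm L w / ‖w‖ ^ 2` is the squared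
distance from `c` to the tangent lines of direction `w` (see `supportForm_eq_cross_sq`). -/
def supportForm (L : Pt ≃ₗ[ℝ] Pt) : QuadraticForm ℝ Pt :=
  (LinearMap.det (L : Pt →ₗ[ℝ] Pt))⁻¹ ^ 2 •
    LinearMap.BilinMap.toQuadraticMap ((innerₗ Pt).compl₁₂ (L : Pt →ₗ[ℝ] Pt) L)

theorem supportForm_apply (L : Pt ≃ₗ[ℝ] Pt) (w : Pt) :
    supportForm L w = ‖L w‖ ^ 2 / LinearMap.det (L : Pt →ₗ[ℝ] Pt) ^ 2 := by
  simp [supportForm, div_eq_inv_mul]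

theorem supportForm_eq_cross_sq {L : Pt ≃ₗ[ℝ] Pt} {c a w : Pt} (hw : w ≠ 0)
    (h : ∃! t : ℝ, a + t • w ∈ ellipse L c) : supportForm L w = cross (a - c) w ^ 2 := by
  have hline : ∀ t : ℝ, a + t • w ∈ ellipse L c ↔ ‖L (a - c) + t • L w‖ = 1 := fun t => by
    rw [ellipse, Set.mem_ofPred_eq, ← L.map_smul, ← map_add, add_sub_right_comm]
  simp_rw [hline] at h
  have htangent :=
    real_inner_sq_eq_of_existsUnique_norm_add_smul_eq_one (L.map_ne_zero_iff.2 hw) h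
  have hcross := real_inner_sq_add_cross_sq (L (a - c)) (L w)
  have hmap := cross_map L (a - c) w
  simp only [LinearEquiv.coe_coe] at hmap
  have hdet : LinearMap.det (L : Pt →ₗ[ℝ] Pt) ≠ 0 := L.isUnit_det'.ne_zero
  rw [hmap] at hcross
  rw [supportForm_apply, div_eq_iff (pow_ne_zero 2 hdet)]
  linear_combination -hcross + htangent

theorem ellipse_eq_of_supportForm_eq {L M : Pt ≃ₗ[ℝ] Pt} (h : supportForm L = supportForm M)
    (c : Pt) : ellipse L c = ellipse M c := by
  set dL := LinearMap.det (L : Pt →ₗ[ℝ] Pt)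
  set dM := LinearMap.det (M : Pt →ₗ[ℝ] Pt)
  have hL0 : dL ≠ 0 := L.isUnit_det'.ne_zero
  have hM0 : dM ≠ 0 := M.isUnit_det'.ne_zero
  have hsupp : ∀ x, ‖L x‖ ^ 2 * dM ^ 2 = ‖M x‖ ^ 2 * dL ^ 2 := fun x => by
    have := DFunLike.congr_fun h x
    rw [supportForm_apply, supportForm_apply, div_eq_div_iff (pow_ne_zero 2 hL0)
      (pow_ne_zero 2 hM0)] at this
    exact this
  -- `dM • L` and `dL • M` have equal norms, hence determinants `dM ^ 2 * dL`, `dL ^ 2 * dM`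
  -- equal up to sign.
  have hdet := sq_det_eq_of_forall_norm_eq (L := dM • (L : Pt →ₗ[ℝ] Pt))
    (M := dL • (M : Pt →ₗ[ℝ] Pt)) fun x => by
      simp only [LinearMap.smul_apply, LinearEquiv.coe_coe, norm_smul]
      rw [← sq_eq_sq₀ (by positivity) (by positivity), mul_pow, mul_pow, Real.norm_eq_abs,
        Real.norm_eq_abs, sq_abs, sq_abs]
      linear_combination hsupp x
  rw [LinearMap.det_smul, LinearMap.det_smul, finrank_euclideanSpace_fin] at hdet
  have hsq : dL ^ 2 = dM ^ 2 := by
    have : (dL ^ 2 * dM ^ 2) * (dL ^ 2 - dM ^ 2) = 0 := by linear_combination -hdet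
    exact sub_eq_zero.1 ((mul_eq_zero.1 this).resolve_left (by positivity))
  ext x
  have hx := hsupp (x - c)
  rw [hsq, mul_left_inj' (pow_ne_zero 2 hM0), sq_eq_sq₀ (norm_nonneg _) (norm_nonneg _)] at hx
  simp only [ellipse, Set.mem_ofPred_eq, hx]

namespace ConvexQuad

variable {P1 P2 P3 P4 : Pt}

theorem rotate (h : ConvexQuad P1 P2 P3 P4) : ConvexQuad P2 P3 P4 P1 := by
  obtain ⟨h1, h2, h3, h4⟩ := h
  refine ⟨?_, ?_, ?_, h1⟩
  · rwa [Set.pair_comm P4 P1, Set.insert_comm P3 P1]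
  · rwa [Set.pair_comm P4 P1, Set.insert_comm P2 P1]
  · rwa [Set.pair_comm P3 P1, Set.insert_comm P2 P1]

theorem first_ne_second (h : ConvexQuad P1 P2 P3 P4) : P1 ≠ P2 := fun h12 =>
  h.1 (subset_convexHull ℝ _ (by simp [h12]))

theorem mem_Icc_of_lineMap_mem (h : ConvexQuad P1 P2 P3 P4) {t : ℝ}
    (ht : lineMap P1 P2 t ∈ convexHull ℝ {P1, P2, P3, P4}) : t ∈ Set.Icc 0 1 := by
  constructor
  · rw [← lineMap_apply_one_sub] at ht
    have := le_one_of_lineMap_mem_convexHull_insert (subset_convexHull ℝ _ (by simp)) h.1 ht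
    linarith
  · rw [Set.insert_comm] at ht
    exact le_one_of_lineMap_mem_convexHull_insert (subset_convexHull ℝ _ (by simp)) h.2.1 ht

theorem existsUnique_lineMap_mem (h : ConvexQuad P1 P2 P3 P4) {S : Set Pt}
    (hS : S ⊆ convexHull ℝ {P1, P2, P3, P4}) (hside : ∃ p, S ∩ segment ℝ P1 P2 = {p}) :
    ∃! t : ℝ, lineMap P1 P2 t ∈ S := by
  obtain ⟨p, hp⟩ := hside
  have hpS : p ∈ S ∩ segment ℝ P1 P2 := hp ▸ rfl
  rw [segment_eq_image_lineMap] at hpS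
  obtain ⟨hpS, t₀, -, rfl⟩ := hpS
  refine ⟨t₀, hpS, fun t ht => lineMap_injective ℝ h.first_ne_second ?_⟩
  have hseg : lineMap P1 P2 t ∈ segment ℝ P1 P2 := by
    rw [segment_eq_image_lineMap]
    exact ⟨t, h.mem_Icc_of_lineMap_mem (hS ht), rfl⟩
  exact Set.mem_singleton_iff.1 (hp ▸ ⟨ht, hseg⟩)

theorem linearIndependent_sub (h : ConvexQuad P1 P2 P3 P4) :
    LinearIndependent ℝ ![P2 - P1, P3 - P2] := by
  rw [LinearIndependent.pair_iff' (sub_ne_zero.2 h.first_ne_second.symm)]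
  intro a ha
  have hP3 : P3 ∈ line[ℝ, P1, P2] := by
    convert lineMap_mem_affineSpan_pair (1 + a) P1 P2 using 1
    rw [lineMap_apply_module', add_smul, one_smul, ha]
    abel
  rcases (collinear_insert_of_mem_affineSpan_pair hP3).wbtw_or_wbtw_or_wbtw with h' | h' | h'
  · exact h.1 (segment_subset_convexHull (by simp) (by simp) (mem_segment_iff_wbtw.2 h'))
  · exact h.2.1 (segment_subset_convexHull (by simp) (by simp) (mem_segment_iff_wbtw.2 h'))
  · exact h.2.2.1 (segment_subset_convexHull (by simp) (by simp) (mem_segment_iff_wbtw.2 h'))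

theorem isParallelogram_of_quadraticForm (h : ConvexQuad P1 P2 P3 P4)
    {F : QuadraticForm ℝ Pt} (hF : F ≠ 0) (h1 : F (P2 - P1) = 0) (h2 : F (P3 - P2) = 0)
    (h3 : F (P4 - P3) = 0) (h4 : F (P1 - P4) = 0) : IsParallelogram P1 P2 P3 P4 := by
  have h' := h.rotate
  have h'' := h'.rotate
  have h''' := h''.rotate
  exact ⟨parallel_of_not_linearIndependent h.first_ne_second h''.first_ne_second
      (F.not_linearIndependent_of_map_eq_zero finrank_euclideanSpace_fin hF
        h.linearIndependent_sub h'.linearIndependent_sub h1 h2 h3),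
    parallel_of_not_linearIndependent h'.first_ne_second h'''.first_ne_second
      (F.not_linearIndependent_of_map_eq_zero finrank_euclideanSpace_fin hF
        h'.linearIndependent_sub h''.linearIndependent_sub h2 h3 h4)⟩

end ConvexQuad

theorem InscribedIn.rotate {E : Set Pt} {P1 P2 P3 P4 : Pt} (h : InscribedIn E P1 P2 P3 P4) :
    InscribedIn E P2 P3 P4 P1 := by
  obtain ⟨hE, h12, h23, h34, h41⟩ := h
  refine ⟨?_, h23, h34, h41, h12⟩
  rwa [Set.pair_comm P4 P1, Set.insert_comm P3 P1, Set.insert_comm P2 P1]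

theorem InscribedIn.supportForm_eq {L : Pt ≃ₗ[ℝ] Pt} {c P1 P2 P3 P4 : Pt}
    (hE : InscribedIn (ellipse L c) P1 P2 P3 P4) (hQ : ConvexQuad P1 P2 P3 P4) :
    supportForm L (P2 - P1) = cross (P1 - c) (P2 - P1) ^ 2 :=
  supportForm_eq_cross_sq (sub_ne_zero.2 hQ.first_ne_second.symm) <| by
    simpa only [lineMap_apply_module', add_comm] using hQ.existsUnique_lineMap_mem hE.1 hE.2.1

/-- If two distinct ellipses with the same center are both inscribed in the same convex
quadrilateral, then the quadrilateral is a parallelogram. -/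
theorem distinct_concentric_inscribed_ellipses_parallelogram
    (P1 P2 P3 P4 : Pt) (hQ : ConvexQuad P1 P2 P3 P4)
    (E1 E2 : Set Pt) (c : Pt) (hne : E1 ≠ E2)
    (h1 : IsEllipseWithCenter E1 c) (h2 : IsEllipseWithCenter E2 c)
    (hi1 : InscribedIn E1 P1 P2 P3 P4) (hi2 : InscribedIn E2 P1 P2 P3 P4) :
    IsParallelogram P1 P2 P3 P4 := by
  obtain ⟨L1, rfl⟩ := h1.exists_eq_ellipse
  obtain ⟨L2, rfl⟩ := h2.exists_eq_ellipse
  have hside : ∀ {Q1 Q2 Q3 Q4 : Pt}, ConvexQuad Q1 Q2 Q3 Q4 →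
      InscribedIn (ellipse L1 c) Q1 Q2 Q3 Q4 → InscribedIn (ellipse L2 c) Q1 Q2 Q3 Q4 →
      (supportForm L1 - supportForm L2) (Q2 - Q1) = 0 := fun hQ hE1 hE2 => by
    rw [sub_apply, hE1.supportForm_eq hQ, hE2.supportForm_eq hQ, sub_self]
  exact hQ.isParallelogram_of_quadraticForm
    (sub_ne_zero.2 fun h => hne (ellipse_eq_of_supportForm_eq h c))
    (hside hQ hi1 hi2) (hside hQ.rotate hi1.rotate hi2.rotate)
    (hside hQ.rotate.rotate hi1.rotate.rotate hi2.rotate.rotate)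
    (hside hQ.rotate.rotate.rotate hi1.rotate.rotate.rotate hi2.rotate.rotate.rotate)
end
end

section
/- Let s,t,u,v,w satisfy the standard conditions and define the linear functions L1(h) = 2(v(t−u) − ws)h + v(s(u+w) − vt), L2(h) = 2(v(u−t) + ws)h + s(v(t−2u) + s(u−w)), L3(h) = (v(t−u) + (u−w)s)(s − 2h), L4(h) = −2uh + vt + s(u−w), and L5(h) = 2(v(t−u) − ws)h + uvs. Then for all h in I: (s−v)L1(h) > 0, (s−v)L2(h) > 0, (s−v)L3(h) > 0, L4(h) > 0, and L5(h) > 0. -/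
lemma lin_pos (a b x y h : ℝ) (h1 : x < h) (h2 : h < y)
    (hx : 0 < a * x + b) (hy : 0 < a * y + b) : 0 < a * h + b := by
  nlinarith [mul_pos (sub_pos.2 h1) hy, mul_pos (sub_pos.2 h2) hx, sub_pos.2 (h1.trans h2)]

set_option maxHeartbeats 1000000 in
/-- Positivity of the linear functions `L1, …, L5` on the open interval `I` with
endpoints `v/2` and `s/2`, under the standard conditions. -/
theorem linear_functions_positive (s t u v w : ℝ)
    (hs : 0 < s) (hv : 0 < v) (hu : 0 < u) (htw : w < t)
    (hc1 : 0 < v * (t - u) + (u - w) * s) (hc2 : 0 < v * t - w * s)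
    (hp1 : w * s - v * (t - u) ≠ 0) (hp2 : s ≠ v) :
    ∀ h ∈ Set.Ioo (min (v / 2) (s / 2)) (max (v / 2) (s / 2)),
      0 < (s - v) * (2 * (v * (t - u) - w * s) * h + v * (s * (u + w) - v * t)) ∧
      0 < (s - v) * (2 * (v * (u - t) + w * s) * h + s * (v * (t - 2 * u) + s * (u - w))) ∧
      0 < (s - v) * ((v * (t - u) + (u - w) * s) * (s - 2 * h)) ∧
      0 < -2 * u * h + v * t + s * (u - w) ∧
      0 < 2 * (v * (t - u) - w * s) * h + u * v * s := by
  intro h hh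
  obtain ⟨hlo, hhi⟩ := hh
  have hsvne : s - v ≠ 0 := sub_ne_zero.2 hp2
  have hsv2 : 0 < (s - v) ^ 2 := by positivity
  have E1v : 0 < ((s - v) * (2 * (v * (t - u) - w * s))) * (v / 2)
      + (s - v) * (v * (s * (u + w) - v * t)) := by
    nlinarith [mul_pos (mul_pos hu hv) hsv2]
  have E1s : 0 < ((s - v) * (2 * (v * (t - u) - w * s))) * (s / 2)
      + (s - v) * (v * (s * (u + w) - v * t)) := by
    nlinarith [mul_pos hsv2 hc2]
  have E2v : 0 < ((s - v) * (2 * (v * (u - t) + w * s))) * (v / 2)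
      + (s - v) * (s * (v * (t - 2 * u) + s * (u - w))) := by
    nlinarith [mul_pos hsv2 hc1]
  have E2s : 0 < ((s - v) * (2 * (v * (u - t) + w * s))) * (s / 2)
      + (s - v) * (s * (v * (t - 2 * u) + s * (u - w))) := by
    nlinarith [mul_pos (mul_pos hs hu) hsv2]
  have E4v : 0 < (-2 * u) * (v / 2) + (v * t + s * (u - w)) := by nlinarith [hc1]
  have E4s : 0 < (-2 * u) * (s / 2) + (v * t + s * (u - w)) := by nlinarith [hc2]
  have E5v : 0 < (2 * (v * (t - u) - w * s)) * (v / 2) + u * v * s := by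
    nlinarith [mul_pos hv hc1]
  have E5s : 0 < (2 * (v * (t - u) - w * s)) * (s / 2) + u * v * s := by
    nlinarith [mul_pos hs hc2]
  rcases lt_or_gt_of_ne hp2 with hsv | hvs
  · -- s < v : interval is (s/2, v/2)
    have hm1 : min (v / 2) (s / 2) = s / 2 := min_eq_right (by linarith)
    have hm2 : max (v / 2) (s / 2) = v / 2 := max_eq_left (by linarith)
    rw [hm1] at hlo; rw [hm2] at hhi
    have g1 := lin_pos _ _ _ _ h hlo hhi E1s E1v
    have g2 := lin_pos _ _ _ _ h hlo hhi E2s E2v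
    have g4 := lin_pos _ _ _ _ h hlo hhi E4s E4v
    have g5 := lin_pos _ _ _ _ h hlo hhi E5s E5v
    have hfac : 0 < (s - v) * (s - 2 * h) :=
      mul_pos_of_neg_of_neg (by linarith) (by linarith)
    refine ⟨by linarith [g1], by linarith [g2], by linarith [mul_pos hc1 hfac],
      by linarith [g4], by linarith [g5]⟩
  · -- v < s : interval is (v/2, s/2)
    have hm1 : min (v / 2) (s / 2) = v / 2 := min_eq_left (by linarith)
    have hm2 : max (v / 2) (s / 2) = s / 2 := max_eq_right (by linarith)
    rw [hm1] at hlo; rw [hm2] at hhi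
    have g1 := lin_pos _ _ _ _ h hlo hhi E1v E1s
    have g2 := lin_pos _ _ _ _ h hlo hhi E2v E2s
    have g4 := lin_pos _ _ _ _ h hlo hhi E4v E4s
    have g5 := lin_pos _ _ _ _ h hlo hhi E5v E5s
    have hfac : 0 < (s - v) * (s - 2 * h) :=
      mul_pos (by linarith) (by linarith)
    refine ⟨by linarith [g1], by linarith [g2], by linarith [mul_pos hc1 hfac],
      by linarith [g4], by linarith [g5]⟩
end

section
/- Let s,t,u,v,w satisfy the standard conditions and define R(h) = (s−2h)(2h−v)(2(v(t−u) − ws)h + uvs). Then R(h) > 0 for all h in I. -/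
/-- Positivity of the cubic `R(h) = (s−2h)(2h−v)(2(v(t−u)−ws)h + uvs)` on the open
interval `I` with endpoints `v/2` and `s/2`, under the standard conditions. -/
theorem cubic_R_positive (s t u v w : ℝ)
    (hs : 0 < s) (hv : 0 < v) (hu : 0 < u) (htw : w < t)
    (hc1 : 0 < v * (t - u) + (u - w) * s) (hc2 : 0 < v * t - w * s)
    (hp1 : w * s - v * (t - u) ≠ 0) (hp2 : s ≠ v) :
    ∀ h ∈ Set.Ioo (min (v / 2) (s / 2)) (max (v / 2) (s / 2)),
      0 < (s - 2 * h) * (2 * h - v) * (2 * (v * (t - u) - w * s) * h + u * v * s) := by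
  intro h hh
  obtain ⟨h1, h2⟩ := hh
  set A := v * (t - u) - w * s with hA
  have hLv : 0 < A * v + u * v * s := by nlinarith [mul_pos hv hc1]
  have hLs : 0 < A * s + u * v * s := by nlinarith [mul_pos hs hc2]
  have hquad : 0 < (s - 2 * h) * (2 * h - v) := by
    rcases lt_or_gt_of_ne hp2 with hsv | hsv
    · have hmin : min (v / 2) (s / 2) = s / 2 := by
        rw [min_eq_right]; linarith
      have hmax : max (v / 2) (s / 2) = v / 2 := by
        rw [max_eq_left]; linarith
      rw [hmin] at h1; rw [hmax] at h2
      nlinarith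
    · have hmin : min (v / 2) (s / 2) = v / 2 := by
        rw [min_eq_left]; linarith
      have hmax : max (v / 2) (s / 2) = s / 2 := by
        rw [max_eq_right]; linarith
      rw [hmin] at h1; rw [hmax] at h2
      nlinarith
  have hbounds : (v / 2 < h ∧ h < s / 2) ∨ (s / 2 < h ∧ h < v / 2) := by
    rcases lt_or_gt_of_ne hp2 with hsv | hsv
    · right
      constructor
      · rw [min_eq_right (by linarith : s / 2 ≤ v / 2)] at h1; exact h1
      · calc h < max (v / 2) (s / 2) := h2
          _ = v / 2 := by rw [max_eq_left]; linarith
    · left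
      constructor
      · rw [min_eq_left (by linarith : v / 2 ≤ s / 2)] at h1; exact h1
      · calc h < max (v / 2) (s / 2) := h2
          _ = s / 2 := by rw [max_eq_right]; linarith
  have hL : 0 < 2 * A * h + u * v * s := by
    rcases le_or_gt 0 A with hA0 | hA0 <;> rcases hbounds with ⟨b1, b2⟩ | ⟨b1, b2⟩ <;>
      nlinarith
  rw [hA] at hL ⊢
  positivity
end

section
/- Let s,t,u,v,w satisfy the standard conditions, let K = (s² + t²)v² − 2ws(vt − ws), and define the quadratic o(h) = −2(s² + t²)(s − v)h² − 2Kh + sK. Then o has exactly one root in the open interval I. -/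
/-- A quadratic with values of opposite signs at `a < b` has exactly one root in `Ioo a b`. -/
lemma quad_unique_root (C B0 C0 a b : ℝ) (f : ℝ → ℝ)
    (hfdef : ∀ x, f x = C * x ^ 2 + B0 * x + C0) (hab : a < b)
    (hsign : f a * f b < 0) :
    ∃! h : ℝ, h ∈ Set.Ioo a b ∧ f h = 0 := by
  have hfeq : f = fun x => C * x ^ 2 + B0 * x + C0 := funext hfdef
  have hcont : ContinuousOn f (Set.Icc a b) := by rw [hfeq]; fun_prop
  have hexists : ∃ x ∈ Set.Ioo a b, f x = 0 := by
    rcases mul_neg_iff.mp hsign with ⟨hfa, hfb⟩ | ⟨hfa, hfb⟩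
    · obtain ⟨x, hx, hfx⟩ := intermediate_value_Ioo' hab.le hcont ⟨hfb, hfa⟩
      exact ⟨x, hx, hfx⟩
    · obtain ⟨x, hx, hfx⟩ := intermediate_value_Ioo hab.le hcont ⟨hfa, hfb⟩
      exact ⟨x, hx, hfx⟩
  obtain ⟨x, hxI, hfx⟩ := hexists
  refine ⟨x, ⟨hxI, hfx⟩, ?_⟩
  rintro y ⟨hyI, hfy⟩
  by_contra hne
  have hxy : y - x ≠ 0 := sub_ne_zero.mpr hne
  rw [hfdef] at hfx hfy
  have h1 : C * (y + x) + B0 = 0 := by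
    have hm : (y - x) * (C * (y + x) + B0) = 0 := by linear_combination hfy - hfx
    rcases mul_eq_zero.mp hm with h | h
    · exact absurd h hxy
    · exact h
  have hB0 : B0 = -C * (y + x) := by linarith
  have hC0 : C0 = C * x * y := by linear_combination hfx - x * h1
  have key : f a * f b = C ^ 2 * ((x - a) * (y - a)) * ((b - x) * (b - y)) := by
    rw [hfdef, hfdef, hB0, hC0]; ring
  have p1 : 0 < (x - a) * (y - a) :=
    mul_pos (sub_pos.mpr hxI.1) (sub_pos.mpr hyI.1)
  have p2 : 0 < (b - x) * (b - y) :=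
    mul_pos (sub_pos.mpr hxI.2) (sub_pos.mpr hyI.2)
  have : 0 ≤ C ^ 2 * ((x - a) * (y - a)) * ((b - x) * (b - y)) :=
    mul_nonneg (mul_nonneg (sq_nonneg C) p1.le) p2.le
  linarith [key ▸ hsign]

/-- The quadratic `o(h) = −2(s² + t²)(s − v)h² − 2Kh + sK`, with
`K = (s² + t²)v² − 2ws(vt − ws)`, has exactly one root in the open interval `I`
with endpoints `v/2` and `s/2`. -/
theorem o_has_unique_root (s t u v w : ℝ)
    (hs : 0 < s) (hv : 0 < v) (hu : 0 < u) (htw : w < t)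
    (hc1 : 0 < v * (t - u) + (u - w) * s) (hc2 : 0 < v * t - w * s)
    (hp1 : w * s - v * (t - u) ≠ 0) (hp2 : s ≠ v) :
    ∃! h : ℝ, h ∈ Set.Ioo (min (v / 2) (s / 2)) (max (v / 2) (s / 2)) ∧
      -2 * (s ^ 2 + t ^ 2) * (s - v) * h ^ 2 -
        2 * ((s ^ 2 + t ^ 2) * v ^ 2 - 2 * w * s * (v * t - w * s)) * h +
        s * ((s ^ 2 + t ^ 2) * v ^ 2 - 2 * w * s * (v * t - w * s)) = 0 := by
  set f : ℝ → ℝ := fun h =>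
      -2 * (s ^ 2 + t ^ 2) * (s - v) * h ^ 2 -
        2 * ((s ^ 2 + t ^ 2) * v ^ 2 - 2 * w * s * (v * t - w * s)) * h +
        s * ((s ^ 2 + t ^ 2) * v ^ 2 - 2 * w * s * (v * t - w * s)) with hf
  have hfdef : ∀ x, f x = (-2 * (s ^ 2 + t ^ 2) * (s - v)) * x ^ 2 +
      (-2 * ((s ^ 2 + t ^ 2) * v ^ 2 - 2 * w * s * (v * t - w * s))) * x +
      (s * ((s ^ 2 + t ^ 2) * v ^ 2 - 2 * w * s * (v * t - w * s))) := by
    intro x; simp only [hf]; ring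
  have hsv : s - v ≠ 0 := sub_ne_zero.mpr hp2
  have hsv2 : 0 < (s - v) ^ 2 :=
    lt_of_le_of_ne (sq_nonneg _) (Ne.symm (pow_ne_zero 2 hsv))
  -- the product of values at v/2 and s/2 is negative
  have hid : f (v / 2) * f (s / 2) =
      -((s - v) ^ 2 * (s ^ 2 + t ^ 2) * s ^ 2 *
        (s ^ 2 * v ^ 2 + (t * v - 2 * w * s) ^ 2)) / 4 := by
    simp only [hf]; ring
  have hposfac : 0 < (s - v) ^ 2 * (s ^ 2 + t ^ 2) * s ^ 2 *
      (s ^ 2 * v ^ 2 + (t * v - 2 * w * s) ^ 2) := by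
    have h2 : 0 < s ^ 2 + t ^ 2 := by positivity
    have h3 : 0 < s ^ 2 := by positivity
    have h4 : 0 < s ^ 2 * v ^ 2 + (t * v - 2 * w * s) ^ 2 := by positivity
    exact mul_pos (mul_pos (mul_pos hsv2 h2) h3) h4
  have hsignvs : f (v / 2) * f (s / 2) < 0 := by rw [hid]; linarith
  have hne : v / 2 ≠ s / 2 := fun h => hp2 (by linarith)
  rcases le_total (v / 2) (s / 2) with h | h
  · have hab : min (v / 2) (s / 2) < max (v / 2) (s / 2) := by
      rw [min_eq_left h, max_eq_right h]; exact lt_of_le_of_ne h hne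
    have hsign : f (min (v / 2) (s / 2)) * f (max (v / 2) (s / 2)) < 0 := by
      rw [min_eq_left h, max_eq_right h]; exact hsignvs
    exact quad_unique_root _ _ _ _ _ f hfdef hab hsign
  · have hab : min (v / 2) (s / 2) < max (v / 2) (s / 2) := by
      rw [min_eq_right h, max_eq_left h]; exact lt_of_le_of_ne h (Ne.symm hne)
    have hsign : f (min (v / 2) (s / 2)) * f (max (v / 2) (s / 2)) < 0 := by
      rw [min_eq_right h, max_eq_left h, mul_comm]; exact hsignvs
    exact quad_unique_root _ _ _ _ _ f hfdef hab hsign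
end

section
/- Let s,t,u,v,w satisfy the standard conditions, let K = (s² + t²)v² − 2ws(vt − ws), define the quadratic o(h) = −2(s² + t²)(s − v)h² − 2Kh + sK, and set h₊ = √K·(−√K + √(2(s² + t²)s(s − v) + K)) / (2(s² + t²)(s − v)). Then h₊ lies in I, o(h₊) = 0, and h₊ is the only root of o in I. -/
set_option maxHeartbeats 1000000


/-- `h₊ = √K(−√K + √(2(s² + t²)s(s − v) + K)) / (2(s² + t²)(s − v))` lies in the open
interval `I` with endpoints `v/2` and `s/2`, is a root of the quadratic
`o(h) = −2(s² + t²)(s − v)h² − 2Kh + sK`, and is its only root in `I`. -/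
theorem h_plus_unique_root (s t u v w : ℝ)
    (hs : 0 < s) (hv : 0 < v) (hu : 0 < u) (htw : w < t)
    (hc1 : 0 < v * (t - u) + (u - w) * s) (hc2 : 0 < v * t - w * s)
    (hp1 : w * s - v * (t - u) ≠ 0) (hp2 : s ≠ v) :
    let K : ℝ := (s ^ 2 + t ^ 2) * v ^ 2 - 2 * w * s * (v * t - w * s)
    let o : ℝ → ℝ := fun h => -2 * (s ^ 2 + t ^ 2) * (s - v) * h ^ 2 - 2 * K * h + s * K
    let hp : ℝ := Real.sqrt K * (-Real.sqrt K + Real.sqrt (2 * (s ^ 2 + t ^ 2) * s * (s - v) + K)) /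
      (2 * (s ^ 2 + t ^ 2) * (s - v))
    hp ∈ Set.Ioo (min (v / 2) (s / 2)) (max (v / 2) (s / 2)) ∧ o hp = 0 ∧
      ∀ h ∈ Set.Ioo (min (v / 2) (s / 2)) (max (v / 2) (s / 2)), o h = 0 → h = hp := by

  intro K o hp
  have hK : K = (s ^ 2 + t ^ 2) * v ^ 2 - 2 * w * s * (v * t - w * s) := rfl
  obtain ⟨A, hA⟩ : ∃ A : ℝ, A = s ^ 2 + t ^ 2 := ⟨_, rfl⟩
  obtain ⟨a, ha⟩ : ∃ a : ℝ, a = 2 * A * (s - v) := ⟨_, rfl⟩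
  have hApos : 0 < A := by rw [hA]; positivity
  have hsv : s - v ≠ 0 := sub_ne_zero.mpr hp2
  have ha0 : a ≠ 0 := by rw [ha]; exact mul_ne_zero (by positivity) hsv
  have hKpos : 0 < K := by
    rw [hK]; nlinarith [sq_nonneg (t*v - w*s), sq_nonneg (w*s), mul_pos (mul_pos hs hv) (mul_pos hs hv)]
  have h2K : A * v ^ 2 < 2 * K := by
    rw [hK, hA]
    nlinarith [sq_nonneg (t*v - 2*w*s), mul_pos (mul_pos hs hv) (mul_pos hs hv)]
  have hDeq : 2 * (s ^ 2 + t ^ 2) * s * (s - v) + K = K + s * a := by rw [ha, hA]; ring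
  have hDpos : 0 < K + s * a := by
    rcases lt_or_gt_of_ne hp2 with h | h
    · -- s < v, a < 0
      have haneg : a < 0 := by rw [ha]; exact mul_neg_of_pos_of_neg (by positivity) (by linarith)
      by_contra hcon
      push_neg at hcon
      have hQ : 0 < a * v ^ 2 / 4 + K * v - s * K := by
        have h1 : 0 < K - A * v ^ 2 / 2 := by linarith
        have h2 : a * v ^ 2 / 4 + K * v - s * K = (v - s) * (K - A * v ^ 2 / 2) := by
          rw [ha]; ring
        rw [h2]; exact mul_pos (by linarith) h1
      nlinarith [sq_nonneg (a*v/2 + K), mul_nonpos_of_nonneg_of_nonpos hKpos.le hcon, mul_neg_of_neg_of_pos haneg hQ]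
    · have : 0 < s * a := by
        rw [ha]
        exact mul_pos hs (mul_pos (by positivity) (by linarith))
      linarith
  obtain ⟨x, hxdef⟩ : ∃ x : ℝ, x = Real.sqrt K := ⟨_, rfl⟩
  obtain ⟨y, hydef⟩ : ∃ y : ℝ, y = Real.sqrt (2 * (s ^ 2 + t ^ 2) * s * (s - v) + K) := ⟨_, rfl⟩
  have hx2 : x ^ 2 = K := by rw [hxdef, Real.sq_sqrt hKpos.le]
  have hy2 : y ^ 2 = K + s * a := by
    rw [hydef, Real.sq_sqrt (by rw [hDeq]; exact hDpos.le), hDeq]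
  have hy2x : y ^ 2 = x ^ 2 + s * a := by rw [hx2]; exact hy2
  have hxpos : 0 < x := by rw [hxdef]; exact Real.sqrt_pos.mpr hKpos
  have hypos : 0 < y := by
    rw [hydef]; exact Real.sqrt_pos.mpr (by rw [hDeq]; exact hDpos)
  have hxy : x ≠ y := by
    intro hcon
    have : s * a ≠ 0 := mul_ne_zero hs.ne' ha0
    apply this
    linear_combination (-(x + y)) * hcon - hy2 + hx2
  have hhp : hp = x * (-x + y) / a := by
    show Real.sqrt K * (-Real.sqrt K + Real.sqrt (2 * (s ^ 2 + t ^ 2) * s * (s - v) + K)) /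
      (2 * (s ^ 2 + t ^ 2) * (s - v)) = x * (-x + y) / a
    rw [hxdef, hydef, ha, hA]
  have ho : ∀ h : ℝ, o h = -(a * h ^ 2) - 2 * K * h + s * K := by
    intro h
    show -2 * (s ^ 2 + t ^ 2) * (s - v) * h ^ 2 - 2 * K * h + s * K = _
    rw [ha, hA]; ring
  clear_value hp o K
  -- key bounds on x*(-x+y)
  have E1 : 2 * (x * y) < x ^ 2 + y ^ 2 := by nlinarith [sq_pos_of_ne_zero (sub_ne_zero.mpr hxy)]
  have hxypos : 0 < x * y := mul_pos hxpos hypos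
  have E2sq : (x ^ 2 + v * a / 2) ^ 2 < (x * y) ^ 2 := by
    have key : (x * y) ^ 2 - (x ^ 2 + v * a / 2) ^ 2 = a ^ 2 * (2 * K - A * v ^ 2) / (4 * A) := by
      rw [hx2]
      have hyy : (x*y)^2 = K * (K + s * a) := by rw [mul_pow, hx2, hy2]
      rw [hyy]
      field_simp
      rw [ha]; ring
    have h1 : 0 < a ^ 2 * (2 * K - A * v ^ 2) / (4 * A) := by
      apply div_pos (mul_pos (sq_pos_of_ne_zero ha0) (by linarith)) (by linarith)
    linarith [key]
  have E2a : x ^ 2 + v * a / 2 < x * y := by nlinarith [E2sq, hxypos, sq_nonneg (x*y - (x^2 + v*a/2))]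
  have E2b : -(x ^ 2 + v * a / 2) < x * y := by nlinarith [E2sq, hxypos, sq_nonneg (x*y + (x^2 + v*a/2))]
  have B1 : x * (-x + y) < s * a / 2 := by nlinarith [E1, hy2x]
  have B2 : v * a / 2 < x * (-x + y) := by nlinarith [E2a]
  have ahp : a * hp = x * (-x + y) := by rw [hhp]; field_simp
  have oroot : o hp = 0 := by
    have h2 : a ^ 2 * o hp = 0 := by
      rw [ho hp]
      have step : a ^ 2 * (-(a * hp ^ 2) - 2 * K * hp + s * K) =
          -(a * (a * hp) ^ 2) - 2 * K * a * (a * hp) + s * K * a ^ 2 := by ring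
      rw [step, ahp, ← hx2]
      linear_combination (-(a * x ^ 2)) * hy2x
    exact (mul_eq_zero.mp h2).resolve_left (pow_ne_zero 2 ha0)
  rcases lt_or_gt_of_ne hp2 with hlt | hgt
  · -- s < v : a < 0, I = (s/2, v/2)
    have haneg : a < 0 := by rw [ha]; exact mul_neg_of_pos_of_neg (by positivity) (by linarith)
    have hmin : min (v / 2) (s / 2) = s / 2 := min_eq_right (by linarith)
    have hmax : max (v / 2) (s / 2) = v / 2 := max_eq_left (by linarith)
    have hp_lt : hp < v / 2 := by
      rw [hhp, div_lt_iff_of_neg haneg]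
      · linarith [B2]
    have hp_gt : s / 2 < hp := by
      rw [hhp, lt_div_iff_of_neg haneg]
      linarith [B1]
    refine ⟨⟨by rw [hmin]; exact hp_gt, by rw [hmax]; exact hp_lt⟩, oroot, ?_⟩
    intro h hmem hroot
    by_contra hne
    rw [hmin, hmax] at hmem
    have e1 : -(a * h ^ 2) - 2 * K * h + s * K = 0 := by rw [← ho]; exact hroot
    have e2 : -(a * hp ^ 2) - 2 * K * hp + s * K = 0 := by rw [← ho]; exact oroot
    have hfac : (h - hp) * (a * (h + hp) + 2 * K) = 0 := by linear_combination e2 - e1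
    have key : a * (h + hp) = -(2 * K) := by
      rcases mul_eq_zero.mp hfac with h0 | h0
      · exact absurd (sub_eq_zero.mp h0) hne
      · linarith
    -- a*h = -2K - a*hp = -2K - (xy - x^2) = -K - xy  (since x^2 = K)
    have hahp : a * hp = x * y - K := by linear_combination ahp - hx2
    have hah : a * h = -K - x * y := by linear_combination key - hahp
    -- from E2b : xy > -(x^2+va/2) = -(K + va/2), so a*h = -K - xy < va/2, hence h > v/2
    have E2b' : -(K + v * a / 2) < x * y := by rw [hx2] at E2b; exact E2b
    have hlt2 : a * h < v * a / 2 := by linarith only [E2b', hah]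
    have : v / 2 < h := by
      by_contra hcon
      push_neg at hcon
      linarith only [hlt2, mul_nonneg (neg_pos.mpr haneg).le (by linarith only [hcon] : (0:ℝ) ≤ v / 2 - h)]
    linarith [hmem.2]
  · -- v < s : a > 0, I = (v/2, s/2)
    have hapos : 0 < a := by rw [ha]; exact mul_pos (by positivity) (by linarith)
    have hmin : min (v / 2) (s / 2) = v / 2 := min_eq_left (by linarith)
    have hmax : max (v / 2) (s / 2) = s / 2 := max_eq_right (by linarith)
    have hp_lt : hp < s / 2 := by
      rw [hhp, div_lt_iff₀ hapos]; linarith [B1]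
    have hp_gt : v / 2 < hp := by
      rw [hhp, lt_div_iff₀ hapos]; linarith [B2]
    refine ⟨⟨by rw [hmin]; exact hp_gt, by rw [hmax]; exact hp_lt⟩, oroot, ?_⟩
    intro h hmem hroot
    by_contra hne
    rw [hmin, hmax] at hmem
    have e1 : -(a * h ^ 2) - 2 * K * h + s * K = 0 := by rw [← ho]; exact hroot
    have e2 : -(a * hp ^ 2) - 2 * K * hp + s * K = 0 := by rw [← ho]; exact oroot
    have hfac : (h - hp) * (a * (h + hp) + 2 * K) = 0 := by linear_combination e2 - e1
    have key : a * (h + hp) = -(2 * K) := by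
      rcases mul_eq_zero.mp hfac with h0 | h0
      · exact absurd (sub_eq_zero.mp h0) hne
      · linarith
    nlinarith only [mul_pos hapos (by linarith only [hmem.1, hp_gt, hv] : (0:ℝ) < h + hp), key, hKpos]
end

section
/- Let s,t,u,v,w satisfy the standard conditions and define A(h) = 4(s−v)²[(t/2 + ((w+u−t)/(v−s))(h − s/2))² + wu(2h−s)/(s−v)], C(h) = 4(s−v)²h², and J(h) = A(h) + C(h). Then J(h) > 0 for all h in I. -/
noncomputable section

/-- The line through the midpoints of the diagonals, as a function of `h`. -/
def Lfn (s t u v w h : ℝ) : ℝ := t / 2 + ((w + u - t) / (v - s)) * (h - s / 2)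

def Afn (s t u v w h : ℝ) : ℝ :=
  4 * (s - v) ^ 2 * ((Lfn s t u v w h) ^ 2 + w * u * (2 * h - s) / (s - v))

def Cfn (s t u v w h : ℝ) : ℝ := 4 * (s - v) ^ 2 * h ^ 2

def Jfn (s t u v w h : ℝ) : ℝ := Afn s t u v w h + Cfn s t u v w h

/-- `J(h) = A(h) + C(h) > 0` on the open interval `I` with endpoints `v/2` and `s/2`,
under the standard conditions. -/
theorem J_pos (s t u v w : ℝ)
    (hs : 0 < s) (hv : 0 < v) (hu : 0 < u) (htw : w < t)
    (hc1 : 0 < v * (t - u) + (u - w) * s) (hc2 : 0 < v * t - w * s)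
    (hp1 : w * s - v * (t - u) ≠ 0) (hp2 : s ≠ v) :
    ∀ h ∈ Set.Ioo (min (v / 2) (s / 2)) (max (v / 2) (s / 2)),
      0 < Jfn s t u v w h := by
  intro h hh
  obtain ⟨h1, h2⟩ := hh
  have hsv : s - v ≠ 0 := sub_ne_zero.2 hp2
  have hk : 0 < (v - 2 * h) * (2 * h - s) := by
    rcases lt_or_gt_of_ne hp2 with hlt | hlt
    · have hle : s / 2 ≤ v / 2 := by linarith
      rw [min_eq_right hle] at h1
      rw [max_eq_left hle] at h2
      nlinarith
    · have hle : v / 2 ≤ s / 2 := by linarith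
      rw [min_eq_left hle] at h1
      rw [max_eq_right hle] at h2
      nlinarith
  have hJ : Jfn s t u v w h =
      ((s - v) * t - (w + u - t) * (2 * h - s)) ^ 2 + 4 * (s - v) ^ 2 * h ^ 2
        + 4 * (s - v) * (w * u) * (2 * h - s) := by
    unfold Jfn Afn Cfn Lfn
    have hvs : v - s ≠ 0 := by intro hx; apply hsv; linarith
    field_simp
    ring
  rw [hJ]
  nlinarith [sq_nonneg ((v - 2 * h) * t + (2 * h - s) * w - (2 * h - s) * u),
    mul_pos (mul_pos hk hu) (sub_pos.2 htw), sq_nonneg ((s - v) * h)]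

end
end

section
/- Let Q be a midpoint diagonal quadrilateral that is also a trapezoid (i.e., at least one pair of opposite sides of Q are parallel). Then Q is a parallelogram. -/
noncomputable section

/-- A midpoint diagonal quadrilateral: a convex quadrilateral in which the diagonals
intersect in a point coinciding with the midpoint of at least one diagonal,
i.e. the midpoint of one diagonal lies on the other diagonal. -/
def MidpointDiagonalQuad (P1 P2 P3 P4 : Pt) : Prop :=
  ConvexQuad P1 P2 P3 P4 ∧
    (midpoint ℝ P1 P3 ∈ segment ℝ P2 P4 ∨ midpoint ℝ P2 P4 ∈ segment ℝ P1 P3)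

/-- A trapezoid: at least one pair of opposite sides lie on parallel lines. -/
def IsTrapezoid (P1 P2 P3 P4 : Pt) : Prop :=
  AffineSubspace.Parallel (affineSpan ℝ ({P1, P2} : Set Pt)) (affineSpan ℝ ({P3, P4} : Set Pt)) ∨
  AffineSubspace.Parallel (affineSpan ℝ ({P2, P3} : Set Pt)) (affineSpan ℝ ({P4, P1} : Set Pt))

lemma invOf_two_real : (⅟2 : ℝ) = 1/2 :=
  invOf_eq_right_inv (by norm_num)

lemma span_sub_comm (x y : Pt) : (ℝ ∙ (x - y)) = (ℝ ∙ (y - x)) := by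
  have h : x - y = (-1 : ℝ) • (y - x) := by module
  rw [h, Submodule.span_singleton_smul_eq (by norm_num : IsUnit (-1:ℝ))]

lemma quad_shift {P1 P2 P3 P4 : Pt} (hc : ConvexQuad P1 P2 P3 P4) :
    ConvexQuad P2 P3 P4 P1 := by
  obtain ⟨h1, h2, h3, h4⟩ := hc
  refine ⟨?_, ?_, ?_, ?_⟩
  · have e : ({P3, P4, P1} : Set Pt) = {P1, P3, P4} := by ext x; simp; tauto
    rw [e]; exact h2
  · have e : ({P2, P4, P1} : Set Pt) = {P1, P2, P4} := by ext x; simp; tauto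
    rw [e]; exact h3
  · have e : ({P2, P3, P1} : Set Pt) = {P1, P2, P3} := by ext x; simp; tauto
    rw [e]; exact h4
  · exact h1

lemma quad_ne34 {P1 P2 P3 P4 : Pt} (hc : ConvexQuad P1 P2 P3 P4) : P3 ≠ P4 := by
  intro h
  exact hc.2.2.1 (subset_convexHull ℝ _ (by simp [h]))

lemma quad_not_collinear {P1 P2 P3 P4 : Pt} (hc : ConvexQuad P1 P2 P3 P4) :
    ¬ Collinear ℝ ({P1, P3, P4} : Set Pt) := by
  obtain ⟨h1, h2, h3, h4⟩ := hc
  intro h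
  rcases h.wbtw_or_wbtw_or_wbtw with hw | hw | hw
  · apply h3
    apply convexHull_mono (show ({P1, P4} : Set Pt) ⊆ {P1, P2, P4} by
      intro x hx
      simp only [Set.mem_insert_iff, Set.mem_singleton_iff] at hx ⊢; tauto)
    rw [convexHull_pair]
    exact mem_segment_iff_wbtw.2 hw
  · apply h4
    apply convexHull_mono (show ({P3, P1} : Set Pt) ⊆ {P1, P2, P3} by
      intro x hx
      simp only [Set.mem_insert_iff, Set.mem_singleton_iff] at hx ⊢; tauto)
    rw [convexHull_pair]
    exact mem_segment_iff_wbtw.2 hw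
  · apply h1
    apply convexHull_mono (show ({P4, P3} : Set Pt) ⊆ {P2, P3, P4} by
      intro x hx
      simp only [Set.mem_insert_iff, Set.mem_singleton_iff] at hx ⊢; tauto)
    rw [convexHull_pair]
    exact mem_segment_iff_wbtw.2 hw

lemma collin_aux {A B C : Pt} {c d : ℝ} (hc : c ≠ 0)
    (h : c • (A - B) = d • (C - B)) : Collinear ℝ ({A, B, C} : Set Pt) := by
  have hAB : A - B = (c⁻¹ * d) • (C - B) := by
    have h2 := congrArg (fun v => (c⁻¹ : ℝ) • v) h
    simp only [smul_smul, inv_mul_cancel₀ hc, one_smul] at h2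
    exact h2
  rw [collinear_iff_of_mem (show B ∈ ({A, B, C} : Set Pt) by simp)]
  refine ⟨C - B, fun p hp => ?_⟩
  simp only [Set.mem_insert_iff, Set.mem_singleton_iff] at hp
  rcases hp with rfl | rfl | rfl
  · exact ⟨c⁻¹ * d, by rw [vadd_eq_add, ← hAB]; abel⟩
  · exact ⟨0, by simp⟩
  · exact ⟨1, by rw [vadd_eq_add, one_smul]; abel⟩

/-- Key lemma: with the first pair of sides parallel, diagonal midpoints coincide. -/
lemma key_lemma {P1 P2 P3 P4 : Pt} (hc : ConvexQuad P1 P2 P3 P4)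
    (hm : midpoint ℝ P1 P3 ∈ segment ℝ P2 P4 ∨ midpoint ℝ P2 P4 ∈ segment ℝ P1 P3)
    (hpar : AffineSubspace.Parallel (affineSpan ℝ ({P1, P2} : Set Pt))
      (affineSpan ℝ ({P3, P4} : Set Pt))) :
    P1 + P3 = P2 + P4 := by
  have hne34 : P3 ≠ P4 := quad_ne34 hc
  have hncol := quad_not_collinear hc
  have hw : P4 - P3 ≠ 0 := sub_ne_zero.2 (Ne.symm hne34)
  rw [AffineSubspace.affineSpan_pair_parallel_iff_vectorSpan_eq] at hpar
  rw [vectorSpan_pair, vectorSpan_pair] at hpar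
  have hmem : (P1 -ᵥ P2) ∈ (ℝ ∙ (P3 -ᵥ P4)) := by
    rw [← hpar]; exact Submodule.mem_span_singleton_self _
  rw [Submodule.mem_span_singleton] at hmem
  obtain ⟨l, hl⟩ := hmem
  simp only [vsub_eq_sub] at hl
  have hl' : P2 - P1 = l • (P4 - P3) := by
    linear_combination (norm := module) hl
  rcases hm with hm | hm
  · obtain ⟨a, b, ha, hb, hab, heq⟩ := hm
    have hb' : b = 1 - a := by linarith
    subst hb'
    rw [midpoint_eq_smul_add, invOf_two_real] at heq
    have key : (a - 1/2) • (P1 - P3) = (-(a * l + (1 - a))) • (P4 - P3) := by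
      linear_combination (norm := module) heq + (-a : ℝ) • hl'
    by_cases ha2 : a = 1/2
    · subst ha2
      rw [show ((1:ℝ)/2 - 1/2) = 0 by norm_num, zero_smul] at key
      have h0 : (-((1:ℝ)/2 * l + (1 - 1/2))) = 0 := by
        rcases smul_eq_zero.1 key.symm with h | h
        · exact h
        · exact absurd h hw
      have hlval : l = -1 := by linarith
      rw [hlval] at hl'
      have h3 : P2 - P1 = P3 - P4 := by rw [hl']; module
      have h2 := sub_eq_sub_iff_add_eq_add.1 h3
      rw [h2]; exact add_comm _ _
    · exact absurd (collin_aux (sub_ne_zero.2 (fun h => ha2 (by linarith))) key) hncol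
  · obtain ⟨a, b, ha, hb, hab, heq⟩ := hm
    have hb' : b = 1 - a := by linarith
    subst hb'
    rw [midpoint_eq_smul_add, invOf_two_real] at heq
    have key : (a - 1/2) • (P1 - P3) = ((l + 1)/2) • (P4 - P3) := by
      linear_combination (norm := module) heq + (1/2 : ℝ) • hl'
    by_cases ha2 : a = 1/2
    · subst ha2
      rw [show ((1:ℝ)/2 - 1/2) = 0 by norm_num, zero_smul] at key
      have h0 : ((l + 1)/2 : ℝ) = 0 := by
        rcases smul_eq_zero.1 key.symm with h | h
        · exact h
        · exact absurd h hw
      have hlval : l = -1 := by linarith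
      rw [hlval] at hl'
      have h3 : P2 - P1 = P3 - P4 := by rw [hl']; module
      have h2 := sub_eq_sub_iff_add_eq_add.1 h3
      rw [h2]; exact add_comm _ _
    · exact absurd (collin_aux (sub_ne_zero.2 (fun h => ha2 (by linarith))) key) hncol

lemma parallelogram_of_eq {P1 P2 P3 P4 : Pt} (h : P1 + P3 = P2 + P4) :
    IsParallelogram P1 P2 P3 P4 := by
  constructor
  · rw [AffineSubspace.affineSpan_pair_parallel_iff_vectorSpan_eq,
      vectorSpan_pair, vectorSpan_pair]
    simp only [vsub_eq_sub]
    rw [show P1 - P2 = P4 - P3 by linear_combination (norm := module) h, span_sub_comm]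
  · rw [AffineSubspace.affineSpan_pair_parallel_iff_vectorSpan_eq,
      vectorSpan_pair, vectorSpan_pair]
    simp only [vsub_eq_sub]
    rw [show P2 - P3 = P1 - P4 by linear_combination (norm := module) (-1 : ℝ) • h,
      span_sub_comm]

/-- A midpoint diagonal quadrilateral which is a trapezoid is a parallelogram. -/
theorem midpoint_diagonal_trapezoid_is_parallelogram (P1 P2 P3 P4 : Pt)
    (hQ : MidpointDiagonalQuad P1 P2 P3 P4) (hT : IsTrapezoid P1 P2 P3 P4) :
    IsParallelogram P1 P2 P3 P4 := by
  obtain ⟨hc, hm⟩ := hQ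
  rcases hT with hpar | hpar
  · exact parallelogram_of_eq (key_lemma hc hm hpar)
  · have hc' := quad_shift hc
    have hm' : midpoint ℝ P2 P4 ∈ segment ℝ P3 P1 ∨ midpoint ℝ P3 P1 ∈ segment ℝ P2 P4 := by
      rcases hm with h | h
      · right; rw [midpoint_comm]; exact h
      · left; rw [segment_symm]; exact h
    have h24 := key_lemma hc' hm' hpar
    have heq : P1 + P3 = P2 + P4 := by rw [h24]; exact add_comm _ _
    exact parallelogram_of_eq heq

end
end

section
/- Suppose Q is a convex quadrilateral that is both tangential (there exists a circle inscribed in Q) and a midpoint diagonal quadrilateral. Then Q is orthodiagonal, i.e., the two diagonals of Q are perpendicular. -/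
/-!
The incircle touches each side perpendicularly to the radius: otherwise the line of the side
would meet the circle a second time, at a point of the quadrilateral on that line but outside
the side, and one endpoint of the side would not be an extreme point of the quadrilateral.
So the two tangents from a vertex have equal length, which gives Pitot's theorem
`AB + CD = BC + DA`, i.e. `δ := BA - BC = DA - DC`.

Write the midpoint `M` of `AC` as `(1 - d) B + d D` and let `β := ⟪C - A, D - B⟫`. Since
`XA² - XC² = 2 ⟪X - M, C - A⟫`, we get `(BA + BC) δ = -2 d β` and `(DA + DC) δ = 2 (1 - d) β`.
Adding `1 - d` times the first to `d` times the second kills the right-hand sides, so `δ = 0`,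
and then `β = 0`.
-/

open scoped RealInnerProductSpace

noncomputable section

/-- A tangential quadrilateral: some circle is inscribed in it. -/
def IsTangential (P1 P2 P3 P4 : Pt) : Prop :=
  ∃ (c : Pt) (r : ℝ), 0 < r ∧ InscribedIn (Metric.sphere c r) P1 P2 P3 P4

open Set AffineMap

section Extreme

variable {𝕜 E : Type*} [Field 𝕜] [LinearOrder 𝕜] [IsStrictOrderedRing 𝕜] [AddCommGroup E]
  [Module 𝕜 E]

theorem mem_extremePoints_convexHull_insert {x : E} {T : Set E} (hx : x ∉ convexHull 𝕜 T) :
    x ∈ (convexHull 𝕜 (insert x T)).extremePoints 𝕜 := by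
  rcases T.eq_empty_or_nonempty with rfl | hT
  · simp
  refine mem_extremePoints_iff_left.2 ⟨subset_convexHull 𝕜 _ (mem_insert x T), ?_⟩
  rintro a ha b hb ⟨l, m, hl, hm, hlm, hlmx⟩
  rw [convexHull_insert hT, convexJoin_singleton_left, mem_iUnion₂] at ha hb
  obtain ⟨a', ha', s₀, s, -, hs, hss, rfl⟩ := ha
  obtain ⟨b', hb', u₀, u, -, hu, huu, rfl⟩ := hb
  rcases hs.eq_or_lt with rfl | hs
  · simp [show s₀ = 1 by linarith]
  exfalso
  set w := l * s + m * u
  have hw : 0 < w := by positivity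
  have hwx : w • x = (l * s) • a' + (m * u) • b' := by
    obtain rfl : s₀ = 1 - s := by linarith
    obtain rfl : u₀ = 1 - u := by linarith
    obtain rfl : m = 1 - l := by linarith
    linear_combination (norm := module) -hlmx
  apply hx
  rw [← inv_smul_smul₀ hw.ne' x, hwx, smul_add, smul_smul, smul_smul]
  refine (convex_convexHull 𝕜 T) ha' hb' (by positivity) (by positivity) ?_
  rw [← mul_add, inv_mul_cancel₀ hw.ne']

theorem lineMap_mem_segment_of_mem_extremePoints {H : Set E} {A B : E}
    (hA : A ∈ H.extremePoints 𝕜) (hB : B ∈ H.extremePoints 𝕜) {t : 𝕜}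
    (ht : lineMap A B t ∈ H) : lineMap A B t ∈ segment 𝕜 A B := by
  have beyond : ∀ {A B : E} {t : 𝕜}, A ∈ H → B ∈ H.extremePoints 𝕜 → 1 < t →
      lineMap A B t ∈ H → lineMap A B t = B := by
    intro A B t hA hB ht hq
    refine mem_extremePoints_iff_left.1 hB |>.2 _ hq _ hA ?_
    rw [openSegment_symm, openSegment_eq_image_lineMap]
    refine ⟨t⁻¹, ⟨by positivity, inv_lt_one_of_one_lt₀ ht⟩, ?_⟩
    rw [lineMap_lineMap_right, inv_mul_cancel₀ (by positivity), lineMap_apply_one]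
  rcases le_or_gt t 1 with ht1 | ht1
  · rcases le_or_gt 0 t with ht0 | ht0
    · rw [segment_eq_image_lineMap]
      exact ⟨t, ⟨ht0, ht1⟩, rfl⟩
    · rw [← lineMap_apply_one_sub] at ht ⊢
      rw [beyond hB.1 hA (by linarith) ht]
      exact left_mem_segment 𝕜 A B
  · rw [beyond hA.1 hB ht1 ht]
    exact right_mem_segment 𝕜 A B

end Extreme

section InnerProductSpace

variable {E : Type*} [NormedAddCommGroup E] [InnerProductSpace ℝ E]

theorem inner_sub_eq_zero_of_sphere_inter_segment_eq_singleton {H : Set E} {c p A B : E}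
    {r : ℝ} (hsub : Metric.sphere c r ⊆ H) (hA : A ∈ H.extremePoints ℝ)
    (hB : B ∈ H.extremePoints ℝ) (hp : Metric.sphere c r ∩ segment ℝ A B = {p}) :
    ⟪B - A, p - c⟫ = 0 := by
  obtain ⟨hpS, hpAB⟩ : p ∈ Metric.sphere c r ∩ segment ℝ A B := hp ▸ mem_singleton p
  obtain ⟨t, -, rfl⟩ := segment_eq_image_lineMap ℝ A B ▸ hpAB
  let S : EuclideanGeometry.Sphere E := ⟨c, r⟩
  set q := S.secondInter (lineMap A B t) (B - A)
  have hqS : q ∈ Metric.sphere c r := (S.secondInter_mem _).2 hpS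
  obtain ⟨s, hqs⟩ : ∃ s, q = lineMap A B s := by
    refine ⟨-2 * ⟪B - A, lineMap A B t - c⟫ / ⟪B - A, B - A⟫ + t, ?_⟩
    simp only [q, EuclideanGeometry.Sphere.secondInter, lineMap_apply_module', vadd_eq_add,
      vsub_eq_sub]
    module
  have hqAB : q ∈ segment ℝ A B :=
    hqs ▸ lineMap_mem_segment_of_mem_extremePoints hA hB (hqs ▸ hsub hqS)
  exact S.secondInter_eq_self_iff.1 (hp ▸ ⟨hqS, hqAB⟩ : q ∈ ({_} : Set E))

def tangentLength (c : E) (r : ℝ) (X : E) : ℝ := √(dist X c ^ 2 - r ^ 2)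

theorem dist_eq_tangentLength {c p A : E} {r : ℝ} (hp : p ∈ Metric.sphere c r)
    (hAp : ⟪A - p, p - c⟫ = 0) : dist A p = tangentLength c r A := by
  have hpyth : dist A c ^ 2 = dist A p ^ 2 + r ^ 2 := by
    rw [← mem_sphere_iff_norm.1 hp, dist_eq_norm, dist_eq_norm, ← sub_add_sub_cancel A p c,
      norm_add_sq_real, hAp, mul_zero, add_zero]
  rw [tangentLength, hpyth, add_sub_cancel_right, Real.sqrt_sq dist_nonneg]

theorem dist_eq_tangentLength_add_tangentLength {H : Set E} {c p A B : E} {r : ℝ}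
    (hsub : Metric.sphere c r ⊆ H) (hA : A ∈ H.extremePoints ℝ) (hB : B ∈ H.extremePoints ℝ)
    (hp : Metric.sphere c r ∩ segment ℝ A B = {p}) :
    dist A B = tangentLength c r A + tangentLength c r B := by
  have htan := inner_sub_eq_zero_of_sphere_inter_segment_eq_singleton hsub hA hB hp
  obtain ⟨hpS, hpAB⟩ : p ∈ Metric.sphere c r ∩ segment ℝ A B := hp ▸ mem_singleton p
  rw [← dist_add_dist_of_mem_segment hpAB, dist_comm p B]
  obtain ⟨t, -, rfl⟩ := segment_eq_image_lineMap ℝ A B ▸ hpAB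
  have hAp : A - lineMap A B t = (-t) • (B - A) := by rw [lineMap_apply_module']; module
  have hBp : B - lineMap A B t = (1 - t) • (B - A) := by rw [lineMap_apply_module']; module
  rw [dist_eq_tangentLength hpS (by rw [hAp, real_inner_smul_left, htan, mul_zero]),
    dist_eq_tangentLength hpS (by rw [hBp, real_inner_smul_left, htan, mul_zero])]

theorem dist_sq_sub_dist_sq_eq_inner_midpoint (X A C : E) :
    dist X A ^ 2 - dist X C ^ 2 = 2 * ⟪X - midpoint ℝ A C, C - A⟫ := by
  rw [dist_eq_norm, dist_eq_norm, ← real_inner_self_eq_norm_sq, ← real_inner_self_eq_norm_sq,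
    midpoint_eq_smul_add]
  simp only [inner_sub_left, inner_sub_right, inner_add_left, real_inner_smul_left,
    real_inner_comm X A, real_inner_comm X C, real_inner_comm A C, invOf_eq_inv]
  ring

theorem inner_sub_sub_eq_zero_of_midpoint_mem_segment {A B C D : E}
    (hBD : dist B A - dist B C = dist D A - dist D C) (hM : midpoint ℝ A C ∈ segment ℝ B D) :
    ⟪C - A, D - B⟫ = 0 := by
  rcases eq_or_ne A C with rfl | hAC
  · rw [sub_self, inner_zero_left]
  obtain ⟨b, d, hb, hd, hbd, hbdM⟩ := hM
  obtain rfl : b = 1 - d := by linarith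
  have hB : (dist B A + dist B C) * (dist B A - dist B C) = -2 * d * ⟪C - A, D - B⟫ := by
    rw [← sq_sub_sq, dist_sq_sub_dist_sq_eq_inner_midpoint, ← hbdM,
      show B - ((1 - d) • B + d • D) = (-d) • (D - B) by module, real_inner_smul_left,
      real_inner_comm]
    ring
  have hD : (dist D A + dist D C) * (dist B A - dist B C) = 2 * (1 - d) * ⟪C - A, D - B⟫ := by
    rw [hBD, ← sq_sub_sq, dist_sq_sub_dist_sq_eq_inner_midpoint, ← hbdM,
      show D - ((1 - d) • B + d • D) = (1 - d) • (D - B) by module, real_inner_smul_left,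
      real_inner_comm]
    ring
  have hweight : 0 < (1 - d) * (dist B A + dist B C) + d * (dist D A + dist D C) := by
    have := dist_pos.2 hAC
    have := dist_triangle_left A C B
    have := dist_triangle_left A C D
    nlinarith
  have hδ : dist B A - dist B C = 0 := by
    refine (mul_eq_zero.1 ?_).resolve_right hweight.ne'
    linear_combination (1 - d) * hB + d * hD
  rw [hδ, mul_zero] at hB hD
  linear_combination (hB - hD) / 2

end InnerProductSpace

theorem ConvexQuad.subset_extremePoints {P1 P2 P3 P4 : Pt} (h : ConvexQuad P1 P2 P3 P4) :
    {P1, P2, P3, P4} ⊆ (convexHull ℝ ({P1, P2, P3, P4} : Set Pt)).extremePoints ℝ := by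
  obtain ⟨h1, h2, h3, h4⟩ := h
  rintro x (rfl | rfl | rfl | rfl)
  · exact mem_extremePoints_convexHull_insert h1
  · rw [insert_comm]
    exact mem_extremePoints_convexHull_insert h2
  · rw [insert_comm _ x, insert_comm _ x]
    exact mem_extremePoints_convexHull_insert h3
  · rw [pair_comm, insert_comm _ x, insert_comm _ x]
    exact mem_extremePoints_convexHull_insert h4

theorem ConvexQuad.dist_add_dist_eq_of_isTangential {P1 P2 P3 P4 : Pt}
    (hQ : ConvexQuad P1 P2 P3 P4) (hT : IsTangential P1 P2 P3 P4) :
    dist P1 P2 + dist P3 P4 = dist P2 P3 + dist P4 P1 := by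
  obtain ⟨c, r, -, hsub, ⟨p12, h12⟩, ⟨p23, h23⟩, ⟨p34, h34⟩, ⟨p41, h41⟩⟩ := hT
  have hext := hQ.subset_extremePoints
  rw [dist_eq_tangentLength_add_tangentLength hsub (hext (by simp)) (hext (by simp)) h12,
    dist_eq_tangentLength_add_tangentLength hsub (hext (by simp)) (hext (by simp)) h23,
    dist_eq_tangentLength_add_tangentLength hsub (hext (by simp)) (hext (by simp)) h34,
    dist_eq_tangentLength_add_tangentLength hsub (hext (by simp)) (hext (by simp)) h41]
  ring

/-- A tangential midpoint diagonal quadrilateral is orthodiagonal. -/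
theorem tangential_midpoint_diagonal_is_orthodiagonal (P1 P2 P3 P4 : Pt)
    (hQ : MidpointDiagonalQuad P1 P2 P3 P4) (hT : IsTangential P1 P2 P3 P4) :
    (inner ℝ (P3 - P1) (P4 - P2) : ℝ) = 0 := by
  have hPitot := hQ.1.dist_add_dist_eq_of_isTangential hT
  rcases hQ.2 with hM | hM
  · refine inner_sub_sub_eq_zero_of_midpoint_mem_segment ?_ hM
    rw [dist_comm P2 P1, dist_comm P4 P3]
    linarith
  · rw [real_inner_comm]
    refine inner_sub_sub_eq_zero_of_midpoint_mem_segment ?_ hM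
    rw [dist_comm P1 P4, dist_comm P3 P2]
    linarith

end
end
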